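/- If the Yellowstone sequence contains only finitely many prime terms, then a contradiction follows; equivalently, infinitely many terms of the Yellowstone sequence are prime. -/

import Mathlib

/-!
Suppose only finitely many terms are prime. If also only finitely many terms were even, then late
in the sequence a prime `p` dividing both `a m` and `a (m + 2)` would make `2 * p` a valid choice
for `a (m + 2)`; since `a (m + 2)` is then an odd composite multiple of `p`, `2 * p` must already
have been used, which bounds `p`, and then a large unused number `2 ^ i * p` bounds `a (m + 2)`.
This contradicts injectivity, so infinitely many terms are even. Next, every prime `q` divides
infinitely many terms: otherwise some large unused `2 ^ i * q` bounds `a (m + 2)` whenever `a m` is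
even. Finally, if a prime `q` never occurs, then whenever `q ∣ a m` the prime `q` itself is a valid
choice for `a (m + 2)`, again bounding infinitely many terms. Hence every prime occurs.
-/

/-- The Yellowstone sequence: a 1 = 1, a 2 = 2, a 3 = 3, and for n ≥ 4,
`a n` is the least positive integer not among `a 1, …, a (n-1)` which shares
a common factor with `a (n-2)` and is coprime to `a (n-1)`. -/
def IsYellowstone (a : ℕ → ℕ) : Prop :=
  a 1 = 1 ∧ a 2 = 2 ∧ a 3 = 3 ∧
  ∀ n, 4 ≤ n →
    IsLeast {k : ℕ | 0 < k ∧ (∀ m, 1 ≤ m → m < n → a m ≠ k) ∧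
      1 < Nat.gcd k (a (n - 2)) ∧ Nat.gcd k (a (n - 1)) = 1} (a n)

open Filter

lemma exists_bound_of_eventually_not {P : ℕ → Prop} (f : ℕ → ℕ) (h : ∀ᶠ n in atTop, ¬ P n) :
    ∃ E, ∀ n, P n → f n ≤ E := by
  obtain ⟨N, hN⟩ := eventually_atTop.1 h
  refine ⟨(Finset.range N).sup f, fun n hn => Finset.le_sup (Finset.mem_range.2 ?_)⟩
  by_contra hle
  exact hN n (not_lt.1 hle) hn

lemma Nat.eq_or_eq_two_mul_of_dvd_of_le {n p : ℕ} (hp : 0 < p) (hpn : p ∣ n) (hn : 0 < n)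
    (hle : n ≤ 2 * p) : n = p ∨ n = 2 * p := by
  obtain ⟨t, rfl⟩ := hpn
  have ht : t ≤ 2 := by nlinarith
  interval_cases t <;> omega

lemma Nat.coprime_two_pow_mul {p x : ℕ} (i : ℕ) (hp : p.Prime) (hx2 : ¬ 2 ∣ x)
    (hpx : ¬ p ∣ x) : Nat.Coprime (2 ^ i * p) x :=
  (((Nat.prime_two.coprime_iff_not_dvd).2 hx2).pow_left i).mul_left
    ((hp.coprime_iff_not_dvd).2 hpx)

namespace IsYellowstone

variable {a : ℕ → ℕ}

theorem isLeast_add_two (ha : IsYellowstone a) {m : ℕ} (hm : 2 ≤ m) :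
    IsLeast {k : ℕ | 0 < k ∧ (∀ j, 1 ≤ j → j < m + 2 → a j ≠ k) ∧
      1 < Nat.gcd k (a m) ∧ Nat.gcd k (a (m + 1)) = 1} (a (m + 2)) := by
  simpa using ha.2.2.2 (m + 2) (by omega)

theorem injOn (ha : IsYellowstone a) : Set.InjOn a (Set.Ici 1) := by
  obtain ⟨h1, h2, h3, hstep⟩ := ha
  have hne : ∀ i j, 1 ≤ i → i < j → a i ≠ a j := by
    intro i j hi hij
    by_cases hj : 4 ≤ j
    · exact (hstep j hj).1.2.1 i hi hij
    · interval_cases j <;> interval_cases i <;> simp [h1, h2, h3]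
  intro i hi j hj hij
  rcases lt_trichotomy i j with hlt | heq | hgt
  exacts [absurd hij (hne i j hi hlt), heq, absurd hij.symm (hne j i hj hgt)]

theorem tendsto_atTop (ha : IsYellowstone a) : Tendsto a atTop atTop := by
  have hinj : Function.Injective fun n => a (n + 1) := fun i j hij => by
    simpa using ha.injOn (Set.mem_Ici.2 (Nat.le_add_left 1 i))
      (Set.mem_Ici.2 (Nat.le_add_left 1 j)) hij
  exact (tendsto_add_atTop_iff_nat 1).1 hinj.nat_tendsto_atTop

theorem eventually_lt_add_two (ha : IsYellowstone a) (C : ℕ) : ∀ᶠ m in atTop, C < a (m + 2) :=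
  (tendsto_add_atTop_nat 2).eventually (ha.tendsto_atTop.eventually_gt_atTop C)

theorem coprime_succ (ha : IsYellowstone a) {n : ℕ} (hn : 1 ≤ n) :
    Nat.Coprime (a n) (a (n + 1)) := by
  rcases (show n = 1 ∨ n = 2 ∨ 3 ≤ n by omega) with rfl | rfl | hn3
  · simp [ha.1]
  · norm_num [ha.2.1, ha.2.2.1]
  · obtain ⟨m, rfl⟩ : ∃ m, n = m + 1 := ⟨n - 1, by omega⟩
    exact Nat.Coprime.symm (ha.isLeast_add_two (by omega)).1.2.2.2

theorem exists_prime_dvd_dvd (ha : IsYellowstone a) {m : ℕ} (hm : 2 ≤ m) :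
    ∃ p, p.Prime ∧ p ∣ a (m + 2) ∧ p ∣ a m := by
  obtain ⟨p, hp, hpd⟩ := Nat.exists_prime_and_dvd (ha.isLeast_add_two hm).1.2.2.1.ne'
  exact ⟨p, hp, hpd.trans (Nat.gcd_dvd_left _ _), hpd.trans (Nat.gcd_dvd_right _ _)⟩

theorem add_two_le_of_prime_dvd (ha : IsYellowstone a) {m p c : ℕ} (hm : 2 ≤ m)
    (hp : p.Prime) (hpc : p ∣ c) (hpm : p ∣ a m) (hc : 0 < c)
    (hcop : Nat.Coprime c (a (m + 1))) (hnew : ∀ j, 1 ≤ j → a j ≠ c) : a (m + 2) ≤ c := by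
  refine (ha.isLeast_add_two hm).2 ⟨hc, fun j hj _ => hnew j hj, ?_, hcop⟩
  exact hp.one_lt.trans_le (Nat.le_of_dvd (Nat.gcd_pos_of_pos_left _ hc) (Nat.dvd_gcd hpc hpm))

theorem frequently_even (ha : IsYellowstone a) (hnp : ∀ᶠ n in atTop, ¬ (a n).Prime) :
    ∃ᶠ n in atTop, 2 ∣ a n := by
  intro hodd
  obtain ⟨E, hE⟩ := exists_bound_of_eventually_not a hodd
  have hfresh : ∀ c, 2 ∣ c → E < c → ∀ j, 1 ≤ j → a j ≠ c := by
    rintro c h2c hEc j - rfl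
    exact hEc.not_ge (hE j h2c)
  obtain ⟨m, hm, hodd1, hodd2, hnp2, hbig⟩ : ∃ m, 2 ≤ m ∧ ¬ 2 ∣ a (m + 1) ∧ ¬ 2 ∣ a (m + 2) ∧
      ¬ (a (m + 2)).Prime ∧ 2 ^ (E + 1) * E < a (m + 2) :=
    ((eventually_ge_atTop 2).and <| ((tendsto_add_atTop_nat 1).eventually hodd).and <|
      ((tendsto_add_atTop_nat 2).eventually hodd).and <|
      ((tendsto_add_atTop_nat 2).eventually hnp).and (ha.eventually_lt_add_two _)).exists
  obtain ⟨p, hp, hpm2, hpm⟩ := ha.exists_prime_dvd_dvd hm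
  have hpm1 : ¬ p ∣ a (m + 1) := fun hpm1 =>
    hp.one_lt.ne' (Nat.eq_one_of_dvd_coprimes (ha.isLeast_add_two hm).1.2.2.2 hpm2 hpm1)
  have hcop : ∀ i, Nat.Coprime (2 ^ i * p) (a (m + 1)) := fun i =>
    Nat.coprime_two_pow_mul i hp hodd1 hpm1
  -- `2 * p` must be used already: otherwise `a (m + 2)` would be `p` or `2 * p`.
  have h2p : 2 * p ≤ E := by
    by_contra hlt
    have hle : a (m + 2) ≤ 2 * p := ha.add_two_le_of_prime_dvd hm hp (dvd_mul_left p 2) hpm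
      (Nat.mul_pos two_pos hp.pos) (by simpa using hcop 1)
      (hfresh _ (dvd_mul_right 2 p) (not_le.1 hlt))
    rcases Nat.eq_or_eq_two_mul_of_dvd_of_le hp.pos hpm2 (by omega) hle with hpeq | h2peq
    · exact hnp2 (hpeq ▸ hp)
    · exact hodd2 (h2peq ▸ dvd_mul_right 2 p)
  have hle := ha.add_two_le_of_prime_dvd hm hp (dvd_mul_left p _) hpm
    (Nat.mul_pos (Nat.two_pow_pos _) hp.pos)
    (hcop (E + 1)) (hfresh _ (dvd_mul_of_dvd_left (dvd_pow_self 2 (by omega)) p)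
      (by nlinarith [Nat.lt_two_pow_self (n := E + 1), hp.pos]))
  have : 2 ^ (E + 1) * p ≤ 2 ^ (E + 1) * E := Nat.mul_le_mul_left _ (by omega)
  omega

theorem frequently_dvd (ha : IsYellowstone a) (heven : ∃ᶠ n in atTop, 2 ∣ a n) {q : ℕ}
    (hq : q.Prime) : ∃ᶠ n in atTop, q ∣ a n := by
  intro hnd
  obtain ⟨E, hE⟩ := exists_bound_of_eventually_not a hnd
  obtain ⟨m, h2m, hm, hqm1, hbig⟩ : ∃ m, 2 ∣ a m ∧ 2 ≤ m ∧ ¬ q ∣ a (m + 1) ∧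
      2 ^ (E + 1) * q < a (m + 2) :=
    (heven.and_eventually <| (eventually_ge_atTop 2).and <|
      ((tendsto_add_atTop_nat 1).eventually hnd).and (ha.eventually_lt_add_two _)).exists
  have hodd1 : ¬ 2 ∣ a (m + 1) := fun h2m1 =>
    by simpa using Nat.eq_one_of_dvd_coprimes (ha.coprime_succ (by omega)) h2m h2m1
  have hfresh : ∀ j, 1 ≤ j → a j ≠ 2 ^ (E + 1) * q := by
    rintro j - hj
    have := hE j (hj ▸ dvd_mul_left q _)
    nlinarith [Nat.lt_two_pow_self (n := E + 1), hq.pos]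
  exact hbig.not_ge (ha.add_two_le_of_prime_dvd hm Nat.prime_two
    (dvd_mul_of_dvd_left (dvd_pow_self 2 (by omega)) q) h2m
    (Nat.mul_pos (Nat.two_pow_pos _) hq.pos)
    (Nat.coprime_two_pow_mul _ hq hodd1 hqm1) hfresh)

theorem not_frequently_dvd (ha : IsYellowstone a) {q : ℕ} (hq : q.Prime)
    (hnew : ∀ j, 1 ≤ j → a j ≠ q) : ¬ ∃ᶠ n in atTop, q ∣ a n := by
  intro hfreq
  obtain ⟨m, hqm, hm, hbig⟩ : ∃ m, q ∣ a m ∧ 2 ≤ m ∧ q < a (m + 2) :=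
    (hfreq.and_eventually ((eventually_ge_atTop 2).and (ha.eventually_lt_add_two q))).exists
  have hqm1 : ¬ q ∣ a (m + 1) := fun hqm1 =>
    hq.one_lt.ne' (Nat.eq_one_of_dvd_coprimes (ha.coprime_succ (by omega)) hqm hqm1)
  exact hbig.not_ge (ha.add_two_le_of_prime_dvd hm hq dvd_rfl hqm hq.pos
    ((hq.coprime_iff_not_dvd).2 hqm1) hnew)

theorem exists_eq_of_prime (ha : IsYellowstone a) (heven : ∃ᶠ n in atTop, 2 ∣ a n) {q : ℕ}
    (hq : q.Prime) : ∃ n, 1 ≤ n ∧ a n = q := by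
  by_contra! hnew
  exact ha.not_frequently_dvd hq hnew (ha.frequently_dvd heven hq)

end IsYellowstone

theorem yellowstone_infinitely_many_primes (a : ℕ → ℕ) (ha : IsYellowstone a) :
    {n : ℕ | 1 ≤ n ∧ (a n).Prime}.Infinite := by
  intro hfin
  have hnp : ∀ᶠ n in atTop, ¬ (a n).Prime := by
    have hfreq := mt Nat.frequently_atTop_iff_infinite.1 (Set.not_infinite.2 hfin)
    filter_upwards [not_frequently.1 hfreq, eventually_ge_atTop 1] with n hn h1 hp using hn ⟨h1, hp⟩
  have heven := ha.frequently_even hnp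
  refine Nat.infinite_setOfPred_prime ((hfin.image a).subset fun q hq => ?_)
  obtain ⟨n, hn, rfl⟩ := ha.exists_eq_of_prime heven hq
  exact ⟨n, ⟨hn, hq⟩, rfl⟩
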